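/- Let Δ be a set of nonnegative integers containing 1 and containing some element d ≥ 3, and let ω(z) = Σ_{d∈Δ} z^d/d!. Then there exists exactly one real number ẑ > 0 satisfying ẑ·ω''(ẑ) = ω'(ẑ), i.e., the equation φ₁(z) = 1 has a unique positive real solution. -/

import Mathlib

/-! Termwise, `z · z^(d-2)/(d-2)! - z^(d-1)/(d-1)! = (d - 2) · z^(d-1)/(d-1)!`, so
`z ω''(z) - ω'(z) = Σ_{d ∈ Δ} (d - 2) z^(d-1)/(d-1)!`. The term `d = 1` is the constant `-1`, every
other term is nondecreasing on `[0, ∞)` and vanishes at `0`, and a term with `d ≥ 3` is strictly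
increasing and at least `1` at `z = (d-1)!`. Hence `z ω'' - ω'` is continuous and strictly increasing
on `[0, ∞)`, equals `-1` at `0` and is nonnegative somewhere, so it has exactly one positive zero. -/

/-- The `k`-th derivative of `ω(z) = Σ_{d ∈ Δ} z^d / d!`, as a real function. -/
noncomputable def omegaD (Δ : Set ℕ) (k : ℕ) (z : ℝ) : ℝ :=
  ∑' d : Δ, if k ≤ (d : ℕ) then z ^ ((d : ℕ) - k) / Nat.factorial ((d : ℕ) - k) else 0

open Set

open scoped Nat

noncomputable def omegaTerm (k d : ℕ) (z : ℝ) : ℝ :=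
  if k ≤ d then z ^ (d - k) / (d - k)! else 0

lemma omegaD_eq_tsum (Δ : Set ℕ) (k : ℕ) (z : ℝ) :
    omegaD Δ k z = ∑' d : Δ, omegaTerm k d z := rfl

lemma summable_omegaTerm (k : ℕ) (z : ℝ) : Summable (omegaTerm k · z) := by
  rw [← summable_nat_add_iff k]
  simpa [omegaTerm] using Real.summable_pow_div_factorial z

lemma omegaTerm_nonneg (k d : ℕ) {z : ℝ} (hz : 0 ≤ z) : 0 ≤ omegaTerm k d z := by
  unfold omegaTerm; split_ifs <;> positivity

lemma omegaTerm_monotoneOn (k d : ℕ) : MonotoneOn (omegaTerm k d) (Ici 0) := by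
  intro x hx y _ hxy
  unfold omegaTerm
  split_ifs
  · gcongr
  · rfl

lemma omegaTerm_strictMonoOn {k d : ℕ} (hkd : k < d) : StrictMonoOn (omegaTerm k d) (Ici 0) := by
  intro x hx y _ hxy
  simp only [omegaTerm, if_pos hkd.le]
  gcongr
  omega

lemma continuous_omegaTerm (k d : ℕ) : Continuous (omegaTerm k d) := by
  unfold omegaTerm; split_ifs <;> fun_prop

lemma continuousOn_omegaD (Δ : Set ℕ) (k : ℕ) {M : ℝ} (hM : 0 ≤ M) :
    ContinuousOn (omegaD Δ k) (Icc 0 M) :=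
  continuousOn_tsum (f := fun (d : Δ) => omegaTerm k d)
    (fun d => (continuous_omegaTerm k d).continuousOn)
    ((summable_omegaTerm k M).subtype Δ) fun d z hz => by
      rw [Real.norm_of_nonneg (omegaTerm_nonneg k d hz.1)]
      exact omegaTerm_monotoneOn k d hz.1 hM hz.2

lemma omegaD_one_zero {Δ : Set ℕ} (h1 : 1 ∈ Δ) : omegaD Δ 1 0 = 1 := by
  rw [omegaD_eq_tsum, tsum_eq_single (⟨1, h1⟩ : Δ)]
  · simp [omegaTerm]
  · intro d hne
    have hd : (d : ℕ) ≠ 1 := fun h => hne (Subtype.ext h)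
    unfold omegaTerm
    split_ifs
    · rw [zero_pow (by omega), zero_div]
    · rfl

noncomputable def omegaGap (Δ : Set ℕ) (z : ℝ) : ℝ := z * omegaD Δ 2 z - omegaD Δ 1 z

noncomputable def gapTerm (d : ℕ) (z : ℝ) : ℝ := ((d : ℝ) - 2) * omegaTerm 1 d z

lemma mul_omegaTerm_two_sub_omegaTerm_one (d : ℕ) (z : ℝ) :
    z * omegaTerm 2 d z - omegaTerm 1 d z = gapTerm d z := by
  unfold gapTerm omegaTerm
  match d with
  | 0 => simp
  | 1 => norm_num
  | n + 2 =>
    simp only [le_add_self, if_true, Nat.add_sub_cancel,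
      show n + 2 - 1 = n + 1 by omega, Nat.factorial_succ]
    push_cast
    field_simp
    ring

lemma hasSum_omegaGap (Δ : Set ℕ) (z : ℝ) :
    HasSum (fun d : Δ => gapTerm d z) (omegaGap Δ z) := by
  have h2 : HasSum (fun d : Δ => z * omegaTerm 2 d z) (z * omegaD Δ 2 z) :=
    ((summable_omegaTerm 2 z).subtype Δ).hasSum.mul_left z
  have h1 : HasSum (fun d : Δ => omegaTerm 1 d z) (omegaD Δ 1 z) :=
    ((summable_omegaTerm 1 z).subtype Δ).hasSum
  have h := h2.sub h1
  simp only [mul_omegaTerm_two_sub_omegaTerm_one] at h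
  exact h

lemma continuousOn_omegaGap (Δ : Set ℕ) {M : ℝ} (hM : 0 ≤ M) :
    ContinuousOn (omegaGap Δ) (Icc 0 M) :=
  (continuousOn_id.mul (continuousOn_omegaD Δ 2 hM)).sub (continuousOn_omegaD Δ 1 hM)

lemma omegaGap_zero {Δ : Set ℕ} (h1 : 1 ∈ Δ) : omegaGap Δ 0 = -1 := by
  simp [omegaGap, omegaD_one_zero h1]

lemma gapTerm_monotoneOn (d : ℕ) : MonotoneOn (gapTerm d) (Ici 0) := by
  rcases lt_or_ge d 2 with hd | hd
  · intro x _ y _ _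
    interval_cases d <;> simp [gapTerm, omegaTerm]
  · intro x hx y hy hxy
    have : (0 : ℝ) ≤ d - 2 := by
      rw [sub_nonneg]
      exact_mod_cast hd
    exact mul_le_mul_of_nonneg_left (omegaTerm_monotoneOn 1 d hx hy hxy) this

lemma gapTerm_strictMonoOn {d : ℕ} (hd : 3 ≤ d) : StrictMonoOn (gapTerm d) (Ici 0) := by
  intro x hx y hy hxy
  have : (0 : ℝ) < d - 2 := by
    rw [sub_pos]
    exact_mod_cast hd
  exact mul_lt_mul_of_pos_left (omegaTerm_strictMonoOn (by omega) hx hy hxy) this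

lemma one_le_gapTerm_factorial {d : ℕ} (hd : 3 ≤ d) : 1 ≤ gapTerm d (d - 1)! := by
  set y : ℝ := ((d - 1)! : ℝ)
  have hy : 1 ≤ y := Nat.one_le_cast.mpr (Nat.factorial_pos _)
  have hcoeff : (1 : ℝ) ≤ d - 2 := by
    rw [le_sub_iff_add_le]
    exact_mod_cast hd
  unfold gapTerm omegaTerm
  rw [if_pos (by omega)]
  calc (1 : ℝ) = y / y := (div_self (by positivity)).symm
    _ ≤ y ^ (d - 1) / y := by gcongr; exact le_self_pow₀ hy (by omega)
    _ ≤ (d - 2) * (y ^ (d - 1) / y) := le_mul_of_one_le_left (by positivity) hcoeff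

lemma strictMonoOn_omegaGap {Δ : Set ℕ} {d : ℕ} (hd : d ∈ Δ) (hd3 : 3 ≤ d) :
    StrictMonoOn (omegaGap Δ) (Ici 0) := fun x hx y hy hxy =>
  hasSum_lt (i := (⟨d, hd⟩ : Δ)) (fun e : Δ => gapTerm_monotoneOn e hx hy hxy.le)
    (gapTerm_strictMonoOn hd3 hx hy hxy) (hasSum_omegaGap Δ x) (hasSum_omegaGap Δ y)

lemma exists_nonneg_omegaGap {Δ : Set ℕ} (h1 : 1 ∈ Δ) {d : ℕ} (hd : d ∈ Δ) (hd3 : 3 ≤ d) :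
    ∃ y, 0 ≤ y ∧ 0 ≤ omegaGap Δ y := by
  have hy : (0 : ℝ) ≤ (d - 1)! := by positivity
  refine ⟨_, hy, ?_⟩
  have hgain := le_hasSum ((hasSum_omegaGap Δ _).sub (hasSum_omegaGap Δ 0)) ⟨d, hd⟩
    fun e _ => sub_nonneg.2 (gapTerm_monotoneOn e self_mem_Ici hy hy)
  have hd0 : gapTerm d 0 = 0 := by
    simp [gapTerm, omegaTerm, show d - 1 ≠ 0 by omega]
  rw [omegaGap_zero h1, hd0] at hgain
  linarith [one_le_gapTerm_factorial hd3]

lemma existsUnique_pos_eq_zero_of_strictMonoOn {f : ℝ → ℝ} {y : ℝ} (hy : 0 ≤ y)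
    (hcont : ContinuousOn f (Icc 0 y)) (hmono : StrictMonoOn f (Ici 0)) (h0 : f 0 < 0)
    (hfy : 0 ≤ f y) : ∃! z, 0 < z ∧ f z = 0 := by
  obtain ⟨z, hz, hfz⟩ := intermediate_value_Icc hy hcont ⟨h0.le, hfy⟩
  have hz0 : 0 < z := hz.1.lt_of_ne (by rintro rfl; exact h0.ne hfz)
  exact ⟨z, ⟨hz0, hfz⟩, fun w ⟨hw, hfw⟩ => hmono.injOn hw.le hz0.le (hfw.trans hfz.symm)⟩

/-- if `1 ∈ Δ` and `Δ` contains some `d ≥ 3`, the equation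
`φ₁(z) = 1`, i.e. `z·ω''(z) = ω'(z)`, has exactly one positive real solution. -/
theorem stmt16 (Δ : Set ℕ) (h1 : 1 ∈ Δ) (h3 : ∃ d ∈ Δ, 3 ≤ d) :
    ∃! z : ℝ, 0 < z ∧ z * omegaD Δ 2 z = omegaD Δ 1 z := by
  obtain ⟨d, hd, hd3⟩ := h3
  obtain ⟨y, hy, hgap⟩ := exists_nonneg_omegaGap h1 hd hd3
  simpa only [omegaGap, sub_eq_zero] using
    existsUnique_pos_eq_zero_of_strictMonoOn hy (continuousOn_omegaGap Δ hy)
      (strictMonoOn_omegaGap hd hd3) (by rw [omegaGap_zero h1]; norm_num) hgap
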